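/- (2×2 determinant lower bound) Let (a_j)_{j∈J} and (b_j)_{j∈J} be families of vectors in R^3 and (λ_j) positive weights with Σ_j λ_j^2 (|a_j|^2 + |b_j|^2) < ∞. Define σ as the 2×2 Gram-type matrix σ_{11} = Σ_j λ_j^2 |a_j|^2, σ_{22} = Σ_j λ_j^2 |b_j|^2, σ_{12} = σ_{21} = Σ_j λ_j^2 a_j·b_j. Then det(σ) ≥ Σ_j λ_j^4 |a_j × b_j|^2. -/
import Mathlib


open Matrix

private lemma dot_self_nonneg' (v : Fin 3 → ℝ) : 0 ≤ v ⬝ᵥ v :=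
  Finset.sum_nonneg fun i _ => mul_self_nonneg _

/-- 2×2 determinant lower bound: for families `(a_j)`, `(b_j)` in `ℝ³` and positive
weights `λ_j` with `Σ λ_j² (|a_j|² + |b_j|²) < ∞`, the Gram-type matrix `σ` satisfies
`det σ ≥ Σ_j λ_j⁴ |a_j × b_j|²`. -/
theorem det_gram_lower_bound {J : Type*} (lam : J → ℝ) (a b : J → Fin 3 → ℝ)
    (hlam : ∀ j, 0 < lam j)
    (hsum : Summable (fun j => lam j ^ 2 * (a j ⬝ᵥ a j + b j ⬝ᵥ b j))) :
    (!![∑' j, lam j ^ 2 * (a j ⬝ᵥ a j), ∑' j, lam j ^ 2 * (a j ⬝ᵥ b j);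
        ∑' j, lam j ^ 2 * (a j ⬝ᵥ b j), ∑' j, lam j ^ 2 * (b j ⬝ᵥ b j)]).det ≥
      ∑' j, lam j ^ 4 *
        ((crossProduct (a j) (b j)) ⬝ᵥ (crossProduct (a j) (b j))) := by
  set A : J → ℝ := fun j => lam j ^ 2 * (a j ⬝ᵥ a j) with hAdef
  set B : J → ℝ := fun j => lam j ^ 2 * (b j ⬝ᵥ b j) with hBdef
  set C : J → ℝ := fun j => lam j ^ 2 * (a j ⬝ᵥ b j) with hCdef
  set E : J → ℝ := fun j => lam j ^ 4 *
      ((crossProduct (a j) (b j)) ⬝ᵥ (crossProduct (a j) (b j))) with hEdef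
  have hA0 : ∀ j, 0 ≤ A j := fun j =>
    mul_nonneg (sq_nonneg _) (dot_self_nonneg' _)
  have hB0 : ∀ j, 0 ≤ B j := fun j =>
    mul_nonneg (sq_nonneg _) (dot_self_nonneg' _)
  -- Lagrange identity : E j = A j * B j - C j ^ 2
  have hLag : ∀ j, E j = A j * B j - C j ^ 2 := by
    intro j
    simp only [hEdef, hAdef, hBdef, hCdef, cross_dot_cross,
      dotProduct_comm (b j) (a j)]
    ring
  have hE0 : ∀ j, 0 ≤ E j := fun j =>
    mul_nonneg (by positivity) (dot_self_nonneg' _)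
  have hCS : ∀ j, C j ^ 2 ≤ A j * B j := fun j => by
    have := hE0 j; rw [hLag j] at this; linarith
  -- summabilities
  have hA : Summable A := by
    refine hsum.of_nonneg_of_le hA0 fun j => ?_
    have := dot_self_nonneg' (b j)
    have h2 := sq_nonneg (lam j)
    simp only [hAdef]; nlinarith
  have hB : Summable B := by
    refine hsum.of_nonneg_of_le hB0 fun j => ?_
    have := dot_self_nonneg' (a j)
    have h2 := sq_nonneg (lam j)
    simp only [hBdef]; nlinarith
  have hCabs : Summable (fun j => |C j|) := by
    refine hsum.of_nonneg_of_le (fun j => abs_nonneg _) fun j => ?_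
    have h1 := hCS j
    have h2 := hA0 j
    have h3 := hB0 j
    have hAB : A j + B j = lam j ^ 2 * (a j ⬝ᵥ a j + b j ⬝ᵥ b j) := by
      simp only [hAdef, hBdef]; ring
    rw [abs_le]
    constructor <;> nlinarith [sq_nonneg (A j - B j), sq_nonneg (A j + B j - 2 * C j),
      sq_nonneg (A j + B j + 2 * C j)]
  have hC : Summable C := by
    rw [← summable_abs_iff]; exact hCabs
  -- E is summable : E j ≤ A j * B j ≤ A j * K
  have hK : ∀ j, B j ≤ ∑' i, (lam i ^ 2 * (a i ⬝ᵥ a i + b i ⬝ᵥ b i)) := by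
    intro j
    have h1 : B j ≤ lam j ^ 2 * (a j ⬝ᵥ a j + b j ⬝ᵥ b j) := by
      have := dot_self_nonneg' (a j); have h2 := sq_nonneg (lam j)
      simp only [hBdef]; nlinarith
    exact h1.trans (Summable.le_tsum hsum j fun i _ =>
      mul_nonneg (sq_nonneg _) (add_nonneg (dot_self_nonneg' _) (dot_self_nonneg' _)))
  have hE : Summable E := by
    refine (hA.mul_right (∑' i, (lam i ^ 2 * (a i ⬝ᵥ a i + b i ⬝ᵥ b i)))).of_nonneg_of_le
      hE0 fun j => ?_
    have h1 := hCS j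
    have h2 := sq_nonneg (C j)
    have h3 := mul_le_mul_of_nonneg_left (hK j) (hA0 j)
    rw [hLag j]; linarith
  -- product summabilities
  have hAB : Summable (fun p : J × J => A p.1 * B p.2) :=
    hA.mul_of_nonneg hB hA0 hB0
  have hBA : Summable (fun p : J × J => A p.2 * B p.1) := by
    have := hB.mul_of_nonneg hA hB0 hA0
    exact this.congr fun p => mul_comm _ _
  have hCC : Summable (fun p : J × J => C p.1 * C p.2) := by
    rw [← summable_abs_iff]
    refine (hCabs.mul_of_nonneg hCabs (fun j => abs_nonneg _)
      (fun j => abs_nonneg _)).congr fun p => ?_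
    exact (abs_mul _ _).symm
  -- the symmetrized nonnegative double-sum term
  set G : J × J → ℝ := fun p =>
    (A p.1 * B p.2 + A p.2 * B p.1) / 2 - C p.1 * C p.2 with hGdef
  have hG : Summable G := ((hAB.add hBA).div_const 2).sub hCC
  have hG0 : ∀ p, 0 ≤ G p := by
    rintro ⟨j, k⟩
    simp only [hGdef]
    have h1 := hCS j
    have h2 := hCS k
    have := hA0 j; have := hA0 k; have := hB0 j; have := hB0 k
    have h3 : C j ^ 2 * C k ^ 2 ≤ (A j * B j) * (A k * B k) :=
      mul_le_mul h1 h2 (sq_nonneg _) (mul_nonneg (hA0 j) (hB0 j))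
    have h4 : (C j * C k) ^ 2 ≤ (A j * B k) * (A k * B j) := by nlinarith [h3]
    have h5 : 0 ≤ A j * B k := mul_nonneg (hA0 j) (hB0 k)
    have h6 : 0 ≤ A k * B j := mul_nonneg (hA0 k) (hB0 j)
    nlinarith [sq_nonneg (A j * B k - A k * B j),
      sq_nonneg (A j * B k + A k * B j - 2 * (C j * C k)),
      sq_nonneg (A j * B k + A k * B j)]
  -- ∑ E ≤ ∑ G via the diagonal embedding
  have hdiag : (∑' j, E j) ≤ ∑' p, G p := by
    refine Summable.tsum_le_tsum_of_inj (fun j => (j, j)) (fun j k h => (Prod.mk.injEq _ _ _ _ ▸ h).1)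
      (fun p _ => hG0 p) (fun j => ?_) hE hG
    simp only [hGdef]
    rw [hLag j]; ring_nf; rfl
  -- compute det
  have hswap : (∑' p : J × J, A p.1 * B p.2) = ∑' p : J × J, A p.2 * B p.1 := by
    exact (Equiv.prodComm J J).tsum_eq (fun p : J × J => A p.2 * B p.1)
  have hdet : (∑' j, A j) * (∑' j, B j) - (∑' j, C j) * (∑' j, C j) = ∑' p, G p := by
    rw [Summable.tsum_mul_tsum hA hB hAB, Summable.tsum_mul_tsum hC hC hCC]
    have h1 : ∑' p, G p
        = (∑' p : J × J, (A p.1 * B p.2 + A p.2 * B p.1) / 2) - ∑' p : J × J, C p.1 * C p.2 := by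
      simp only [hGdef]
      exact Summable.tsum_sub ((hAB.add hBA).div_const 2) hCC
    rw [h1, tsum_div_const, Summable.tsum_add hAB hBA, ← hswap]
    ring
  rw [Matrix.det_fin_two_of, ge_iff_le]
  calc (∑' j, E j) ≤ ∑' p, G p := hdiag
    _ = (∑' j, A j) * (∑' j, B j) - (∑' j, C j) * (∑' j, C j) := hdet.symm
    _ ≤ _ := le_refl _
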